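/- arXiv:2001.10770 — 4 statements merged into one kernel-verified Lean document; each statement's English description precedes it below -/
import Mathlib

section
/- Let H be an s × n matrix over F₂ such that every vector in F₂^s is a sum of at most 2 columns of H (where the empty sum is the zero vector). Fix a row index i, and let H' be the s × (n+1) matrix obtained from H by replacing row i with its complement (flipping every bit in row i) and appending one extra column equal to the i-th standard basis vector e_i. Then every vector in F₂^s is a sum of at most 2 columns of H'. -/
/-!
With `c = e_{i₀}`, the old columns become `h_j + c` and `c` is a new column. Since `c + c = 0`,
`h_j = (h_j + c) + c` and `h_j + h_k = (h_j + c) + (h_k + c)`, so sums of at most two columns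
of `H` remain such sums for `H'`.
-/

open Function

def SumsOfAtMostTwoCover {ι M : Type*} [AddCommMonoid M] (x : ι → M) : Prop :=
  ∀ v : M, ∃ T : Finset ι, T.card ≤ 2 ∧ v = ∑ j ∈ T, x j

theorem exists_card_le_two_sum_eq_iff {ι M : Type*} [AddCommMonoid M] (x : ι → M) (v : M) :
    (∃ T : Finset ι, T.card ≤ 2 ∧ v = ∑ j ∈ T, x j) ↔
      v = 0 ∨ (∃ j, v = x j) ∨ ∃ j k, j ≠ k ∧ v = x j + x k := by
  classical
  constructor
  · rintro ⟨T, hT, rfl⟩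
    interval_cases hcard : T.card
    · exact .inl (by simp [Finset.card_eq_zero.mp hcard])
    · obtain ⟨j, rfl⟩ := Finset.card_eq_one.mp hcard
      exact .inr (.inl ⟨j, Finset.sum_singleton x j⟩)
    · obtain ⟨j, k, hjk, rfl⟩ := Finset.card_eq_two.mp hcard
      exact .inr (.inr ⟨j, k, hjk, Finset.sum_pair hjk⟩)
  · rintro (rfl | ⟨j, rfl⟩ | ⟨j, k, hjk, rfl⟩)
    · exact ⟨∅, by simp, by simp⟩
    · exact ⟨{j}, by simp, (Finset.sum_singleton x j).symm⟩
    · exact ⟨{j, k}, (Finset.card_le_two : _ ≤ 2), (Finset.sum_pair hjk).symm⟩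

theorem SumsOfAtMostTwoCover.add_const_append {ι κ M : Type*} [AddCommMonoid M] {x : ι → M}
    (hx : SumsOfAtMostTwoCover x) {c : M} (hc : c + c = 0) {y : κ → M} {e : ι → κ}
    (he : Injective e) {z : κ} (hz : ∀ j, e j ≠ z) (hye : ∀ j, y (e j) = x j + c)
    (hyz : y z = c) : SumsOfAtMostTwoCover y := by
  intro v
  rw [exists_card_le_two_sum_eq_iff]
  rcases (exists_card_le_two_sum_eq_iff x v).mp (hx v) with rfl | ⟨j, rfl⟩ | ⟨j, k, hjk, rfl⟩
  · exact .inl rfl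
  · exact .inr (.inr ⟨e j, z, hz j, by rw [hye, hyz, add_assoc, hc, add_zero]⟩)
  · exact .inr (.inr ⟨e j, e k, he.ne hjk, by rw [hye, hye, add_add_add_comm, hc, add_zero]⟩)

/-- If every vector of `F₂^s` is a sum of at most 2 columns of `H`, then the same holds
for the `i₀`-th modified matrix `H'`, obtained by complementing row `i₀` of `H` and
appending the standard basis column `e_{i₀}`. -/
theorem modified_matrix_covering (s n : ℕ) (H : Matrix (Fin s) (Fin n) (ZMod 2))
    (i₀ : Fin s)
    (hcov : ∀ v : Fin s → ZMod 2, ∃ T : Finset (Fin n), T.card ≤ 2 ∧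
      v = ∑ j ∈ T, fun i => H i j)
    (H' : Matrix (Fin s) (Fin (n + 1)) (ZMod 2))
    (hH'₁ : ∀ (i : Fin s) (j : Fin n),
      H' i j.castSucc = H i j + (if i = i₀ then 1 else 0))
    (hH'₂ : ∀ i : Fin s, H' i (Fin.last n) = if i = i₀ then 1 else 0) :
    ∀ v : Fin s → ZMod 2, ∃ T : Finset (Fin (n + 1)), T.card ≤ 2 ∧
      v = ∑ j ∈ T, fun i => H' i j := by
  have hc : (fun i => if i = i₀ then 1 else 0 : Fin s → ZMod 2) +
      (fun i => if i = i₀ then 1 else 0) = 0 :=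
    funext fun _ => CharTwo.add_self_eq_zero _
  exact SumsOfAtMostTwoCover.add_const_append hcov hc (Fin.castSucc_injective n)
    (fun j => (Fin.castSucc_lt_last j).ne) (fun j => funext fun i => hH'₁ i j)
    (funext hH'₂)
end

section
/- For all positive integers s and t with t ≤ s, the minimum number of t-dimensional subspaces of F₂^s whose union contains every nonzero vector of F₂^s (equivalently, covers every 1-dimensional subspace) equals ⌈(2^s - 1)/(2^t - 1)⌉. -/
/-!
Each `t`-dimensional subspace over `𝔽_q` contains `q ^ t - 1` of the `q ^ s - 1` nonzero vectors,
which gives the lower bound. For the upper bound write `s = t + r`, identify `𝔽_q ^ s` with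
`X × 𝔽_{q ^ r}` where `dim X = t`, and pick `φ : X → 𝔽_{q ^ r}` of rank `min t r`. The `q ^ r`
graphs of `a • φ` cover every `(x, y)` with `φ x ≠ 0`, since `y = (y / φ x) • φ x`. The remaining
vectors form `ker φ × 𝔽_{q ^ r}`, of dimension `max t r < s`, which by induction is covered by
`⌈(q ^ max t r - 1) / (q ^ t - 1)⌉ = ⌈(q ^ r - 1) / (q ^ t - 1)⌉` further subspaces; the total is
the bound because `q ^ (t + r) - 1 = q ^ r * (q ^ t - 1) + (q ^ r - 1)`.
-/

open Module Finset LinearMap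

section

variable {K V W : Type*} [Field K] [AddCommGroup V] [Module K V] [AddCommGroup W] [Module K W]

theorem LinearMap.finrank_graph (f : V →ₗ[K] W) : finrank K f.graph = finrank K V := by
  rw [graph_eq_range_prod, finrank_range_of_inj]
  exact fun x y h => congrArg Prod.fst h

theorem exists_linearMap_finrank_ker_add_eq_max (X Y : Type*) [AddCommGroup X] [Module K X]
    [AddCommGroup Y] [Module K Y] [FiniteDimensional K X] [FiniteDimensional K Y] :
    ∃ φ : X →ₗ[K] Y, finrank K (ker φ) + finrank K Y = max (finrank K X) (finrank K Y) := by
  rcases le_total (finrank K X) (finrank K Y) with h | h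
  · obtain ⟨φ, hφ⟩ := finrank_le_iff_exists_linearMap.1 h
    exact ⟨φ, by rw [ker_eq_bot.2 hφ, finrank_bot, zero_add, max_eq_right h]⟩
  · obtain ⟨f, hf⟩ := finrank_le_iff_exists_linearMap.1 h
    obtain ⟨g, hg⟩ := f.exists_leftInverse_of_injective (ker_eq_bot.2 hf)
    have hg_range : range g = ⊤ := range_eq_top.2 fun y => ⟨f y, congr($hg y)⟩
    refine ⟨g, ?_⟩
    rw [max_eq_left h, ← g.finrank_range_add_finrank_ker, hg_range, finrank_top, add_comm]

def IsSubspaceCover (t : ℕ) (S : Finset (Submodule K V)) : Prop :=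
  (∀ U ∈ S, finrank K U = t) ∧ ∀ v : V, v ≠ 0 → ∃ U ∈ S, v ∈ U

namespace IsSubspaceCover

variable {t : ℕ}

theorem exists_map {S : Finset (Submodule K W)} (hS : IsSubspaceCover t S) {f : W →ₗ[K] V}
    (hf : Function.Injective f) :
    ∃ S' : Finset (Submodule K V), S'.card = S.card ∧ (∀ U ∈ S', finrank K U = t) ∧
      ∀ w : W, w ≠ 0 → ∃ U ∈ S', f w ∈ U := by
  classical
  refine ⟨S.image (Submodule.map f),
    card_image_of_injective _ (Submodule.map_injective_of_injective hf), ?_, ?_⟩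
  · simp only [mem_image, forall_exists_index, and_imp]
    rintro _ U hU rfl
    rw [← (Submodule.equivMapOfInjective f hf U).finrank_eq, hS.1 U hU]
  · intro w hw
    obtain ⟨U, hU, hwU⟩ := hS.2 w hw
    exact ⟨U.map f, mem_image_of_mem _ hU, Submodule.mem_map_of_mem hwU⟩

theorem exists_of_linearEquiv {S : Finset (Submodule K W)} (hS : IsSubspaceCover t S)
    (e : W ≃ₗ[K] V) : ∃ S' : Finset (Submodule K V), IsSubspaceCover t S' ∧ S'.card = S.card := by
  obtain ⟨S', hcard, hdim, hcov⟩ := hS.exists_map e.injective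
  refine ⟨S', ⟨hdim, fun v hv => ?_⟩, hcard⟩
  simpa using hcov (e.symm v) (by simpa using hv)

theorem card_sub_one_le [Fintype K] [Fintype V] {S : Finset (Submodule K V)}
    (hS : IsSubspaceCover t S) : Fintype.card V - 1 ≤ S.card * (Fintype.card K ^ t - 1) := by
  classical
  calc Fintype.card V - 1 = (univ.erase (0 : V)).card := by
        rw [card_erase_of_mem (mem_univ _), card_univ]
    _ ≤ (S.biUnion fun U => (univ.filter (· ∈ U)).erase 0).card := by
        refine card_le_card fun v hv => ?_
        obtain ⟨U, hU, hvU⟩ := hS.2 v (ne_of_mem_erase hv)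
        simp only [mem_biUnion, mem_erase, mem_filter, mem_univ, true_and]
        exact ⟨U, hU, ne_of_mem_erase hv, hvU⟩
    _ ≤ ∑ U ∈ S, ((univ.filter (· ∈ U)).erase 0).card := card_biUnion_le
    _ = ∑ _U ∈ S, (Fintype.card K ^ t - 1) := by
        refine sum_congr rfl fun U hU => ?_
        rw [card_erase_of_mem (by simp), ← hS.1 U hU, ← card_eq_pow_finrank,
          ← Fintype.card_subtype]
    _ = S.card * (Fintype.card K ^ t - 1) := by rw [sum_const, smul_eq_mul]

theorem ceilDiv_le_card [Fintype K] [Fintype V] {S : Finset (Submodule K V)}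
    (hS : IsSubspaceCover t S) :
    (Fintype.card K ^ finrank K V - 1) ⌈/⌉ (Fintype.card K ^ t - 1) ≤ S.card := by
  rcases Nat.eq_zero_or_pos (Fintype.card K ^ t - 1) with h | h
  · simp [h]
  · rw [ceilDiv_le_iff_le_mul h, ← card_eq_pow_finrank, mul_comm]
    exact hS.card_sub_one_le

theorem exists_prod_field {F X : Type*} [Field F] [Finite F] [Algebra K F]
    [AddCommGroup X] [Module K X] (hX : finrank K X = t) (φ : X →ₗ[K] F)
    {T : Finset (Submodule K (ker φ × F))} (hT : IsSubspaceCover t T) :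
    ∃ S : Finset (Submodule K (X × F)), IsSubspaceCover t S ∧
      S.card ≤ Nat.card F + T.card := by
  classical
  have : Fintype F := Fintype.ofFinite F
  let ψ : ker φ × F →ₗ[K] X × F := (ker φ).subtype.prodMap LinearMap.id
  have hψ : Function.Injective ψ := Prod.map_injective.2 ⟨Subtype.val_injective, fun _ _ h => h⟩
  obtain ⟨T', hT'card, hT'dim, hT'cov⟩ := hT.exists_map hψ
  let graphs := univ.image fun a : F => (a • φ).graph
  refine ⟨graphs ∪ T', ⟨fun U hU => ?_, fun ⟨x, y⟩ hv => ?_⟩, ?_⟩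
  · rcases mem_union.1 hU with hU | hU
    · obtain ⟨a, -, rfl⟩ := mem_image.1 hU
      exact (finrank_graph _).trans hX
    · exact hT'dim U hU
  · by_cases hx : φ x = 0
    · have hv' : ((⟨x, hx⟩, y) : ker φ × F) ≠ 0 := fun h =>
        hv (show ψ (⟨x, hx⟩, y) = 0 by rw [h, map_zero])
      obtain ⟨U, hU, hxyU⟩ := hT'cov _ hv'
      exact ⟨U, mem_union_right _ hU, hxyU⟩
    · refine ⟨((y / φ x) • φ).graph, mem_union_left _ (mem_image_of_mem _ (mem_univ _)), ?_⟩
      simp [div_mul_cancel₀ y hx]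
  · calc (graphs ∪ T').card ≤ graphs.card + T'.card := card_union_le _ _
      _ ≤ Nat.card F + T.card := by
        rw [hT'card, Nat.card_eq_fintype_card, ← card_univ]
        exact Nat.add_le_add_right card_image_le _

end IsSubspaceCover

end

theorem Nat.add_mul_ceilDiv {a b : ℕ} (c : ℕ) (hb : 0 < b) : (a + b * c) ⌈/⌉ b = a ⌈/⌉ b + c := by
  rw [Nat.ceilDiv_eq_add_pred_div, Nat.ceilDiv_eq_add_pred_div,
    show a + b * c + b - 1 = a + b - 1 + c * b by grind, Nat.add_mul_div_right _ _ hb]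

theorem Nat.one_le_ceilDiv {a b : ℕ} (ha : 0 < a) (hb : 0 < b) : 1 ≤ a ⌈/⌉ b := by
  by_contra! h
  have := (ceilDiv_le_iff_le_mul hb).1 (Nat.lt_one_iff.1 h).le
  omega

theorem pow_add_sub_one_ceilDiv {q : ℕ} (hq : 1 < q) {t : ℕ} (ht : t ≠ 0) (r : ℕ) :
    (q ^ (t + r) - 1) ⌈/⌉ (q ^ t - 1) = (q ^ r - 1) ⌈/⌉ (q ^ t - 1) + q ^ r := by
  have hqt : 1 < q ^ t := Nat.one_lt_pow ht hq
  have hqr : 1 ≤ q ^ r := Nat.one_le_pow _ _ (by omega)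
  have hqtr : 1 ≤ q ^ t * q ^ r := Nat.one_le_iff_ne_zero.2 (by positivity)
  have hsplit : q ^ (t + r) - 1 = q ^ r - 1 + (q ^ t - 1) * q ^ r := by
    rw [pow_add]
    zify [hqt.le, hqr, hqtr]
    ring
  rw [hsplit, Nat.add_mul_ceilDiv _ (by omega)]

theorem pow_max_sub_one_ceilDiv_le {q : ℕ} (hq : 1 < q) {r : ℕ} (hr : r ≠ 0) (t : ℕ) :
    (q ^ max t r - 1) ⌈/⌉ (q ^ t - 1) ≤ (q ^ r - 1) ⌈/⌉ (q ^ t - 1) := by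
  rcases le_total t r with h | h
  · rw [max_eq_right h]
  rcases (q ^ t - 1).eq_zero_or_pos with hb | hb
  · simp [hb]
  rw [max_eq_left h]
  calc (q ^ t - 1) ⌈/⌉ (q ^ t - 1) ≤ 1 := (ceilDiv_le_iff_le_mul hb).2 (by rw [mul_one])
    _ ≤ (q ^ r - 1) ⌈/⌉ (q ^ t - 1) :=
      Nat.one_le_ceilDiv (Nat.sub_pos_of_lt (Nat.one_lt_pow hr hq)) hb

theorem exists_isSubspaceCover_card_le (p : ℕ) [Fact p.Prime] {t s : ℕ} (ht : 1 ≤ t)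
    (hts : t ≤ s) : ∃ S : Finset (Submodule (ZMod p) (Fin s → ZMod p)),
      IsSubspaceCover t S ∧ S.card ≤ (p ^ s - 1) ⌈/⌉ (p ^ t - 1) := by
  induction s using Nat.strong_induction_on with
  | _ s ih =>
  have hp : 1 < p := (Fact.out : p.Prime).one_lt
  rcases hts.eq_or_lt with rfl | hlt
  · refine ⟨{⊤}, ⟨by simp, fun v _ => ⟨⊤, mem_singleton_self _, Submodule.mem_top⟩⟩, ?_⟩
    have hpt : 0 < p ^ t - 1 := Nat.sub_pos_of_lt (Nat.one_lt_pow (by omega) hp)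
    rw [card_singleton]
    exact Nat.one_le_ceilDiv hpt hpt
  obtain ⟨r, rfl⟩ : ∃ r, s = t + r := ⟨s - t, by omega⟩
  have hr : r ≠ 0 := by omega
  obtain ⟨φ, hφ⟩ := exists_linearMap_finrank_ker_add_eq_max (K := ZMod p)
    (Fin t → ZMod p) (GaloisField p r)
  rw [finrank_fin_fun, GaloisField.finrank p hr] at hφ
  obtain ⟨T, hT, hTcard⟩ := ih (max t r) (by omega) (le_max_left t r)
  obtain ⟨T', hT', hT'card⟩ := hT.exists_of_linearEquiv
    (LinearEquiv.ofFinrankEq _ (ker φ × GaloisField p r)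
      (by rw [finrank_prod, finrank_fin_fun, GaloisField.finrank p hr, hφ]))
  obtain ⟨S, hS, hScard⟩ := hT'.exists_prod_field (finrank_fin_fun _) φ
  obtain ⟨S', hS', hS'card⟩ := hS.exists_of_linearEquiv
    (LinearEquiv.ofFinrankEq _ (Fin (t + r) → ZMod p)
      (by rw [finrank_prod, finrank_fin_fun, finrank_fin_fun, GaloisField.finrank p hr]))
  refine ⟨S', hS', ?_⟩
  calc S'.card = S.card := hS'card
    _ ≤ Nat.card (GaloisField p r) + T'.card := hScard
    _ ≤ p ^ r + (p ^ max t r - 1) ⌈/⌉ (p ^ t - 1) := by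
      rw [GaloisField.card p r hr, hT'card]; exact Nat.add_le_add_left hTcard _
    _ ≤ p ^ r + (p ^ r - 1) ⌈/⌉ (p ^ t - 1) :=
      Nat.add_le_add_left (pow_max_sub_one_ceilDiv_le hp hr t) _
    _ = (p ^ (t + r) - 1) ⌈/⌉ (p ^ t - 1) := by
      rw [pow_add_sub_one_ceilDiv hp (by omega), add_comm]

theorem covering_design_number_general (s t : ℕ) (ht : 1 ≤ t) (hts : t ≤ s) :
    IsLeast {n : ℕ | ∃ S : Finset (Submodule (ZMod 2) (Fin s → ZMod 2)),
        S.card = n ∧ (∀ V ∈ S, Module.finrank (ZMod 2) V = t) ∧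
        ∀ v : Fin s → ZMod 2, v ≠ 0 → ∃ V ∈ S, v ∈ V}
      ((2 ^ s - 1 + (2 ^ t - 1) - 1) / (2 ^ t - 1)) := by
  have lower : ∀ S : Finset (Submodule (ZMod 2) (Fin s → ZMod 2)), IsSubspaceCover t S →
      (2 ^ s - 1) ⌈/⌉ (2 ^ t - 1) ≤ S.card := fun S hS => by
    simpa using hS.ceilDiv_le_card
  rw [← Nat.ceilDiv_eq_add_pred_div]
  obtain ⟨S, hS, hcard⟩ := exists_isSubspaceCover_card_le 2 ht hts
  exact ⟨⟨S, le_antisymm hcard (lower S hS), hS⟩, fun n ⟨S, hn, hS⟩ => hn ▸ lower S hS⟩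

/-- The covering number `C₂(s,t,1)`: the minimum number of `t`-dimensional subspaces of
`F₂^s` whose union contains every nonzero vector equals `⌈(2^s-1)/(2^t-1)⌉`. -/
theorem covering_design_number (s t : ℕ) (hs : 1 ≤ s) (ht : 1 ≤ t) (hts : t ≤ s) :
    IsLeast {n : ℕ | ∃ S : Finset (Submodule (ZMod 2) (Fin s → ZMod 2)),
        S.card = n ∧ (∀ V ∈ S, Module.finrank (ZMod 2) V = t) ∧
        ∀ v : Fin s → ZMod 2, v ≠ 0 → ∃ V ∈ S, v ∈ V}
      ((2 ^ s - 1 + (2 ^ t - 1) - 1) / (2 ^ t - 1)) :=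
  covering_design_number_general s t ht hts
end

section
/- Let s be a positive integer and m a positive integer such that 7^m < 2^(s-1) · (2^s - 1). Then Σ_{i=2}^{m} C(m,i) · (2^(i-1) - 1) · 3^i < C(2^s, 2), i.e., the counting condition Σ_{i=2}^{m} C(m,i)·S(i,2)·3^i ≥ C(2^s + 2 - 2, 2) fails. Consequently any m satisfying the counting condition obeys m ≥ log₇(2^(s-1)·(2^s-1)). -/
/-!
The counting sum is dominated termwise by the binomial expansion of `(6 + 1)^m`, because
`S(i,2)·3^i = (2^(i-1) - 1)·3^i ≤ 6^i`; hence it is at most `7^m`, while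
`C(2^s, 2) = 2^(s-1)·(2^s - 1)`. Taking `log₇` gives the bound on `m`.
-/

open Finset

theorem Nat.sum_choose_mul_le_add_one_pow {c m : ℕ} {t : Finset ℕ} (ht : t ⊆ range (m + 1))
    {f : ℕ → ℕ} (hf : ∀ i ∈ t, f i ≤ c ^ i) :
    ∑ i ∈ t, m.choose i * f i ≤ (c + 1) ^ m :=
  calc ∑ i ∈ t, m.choose i * f i
      ≤ ∑ i ∈ t, m.choose i * c ^ i := sum_le_sum fun i hi => Nat.mul_le_mul_left _ (hf i hi)
    _ ≤ ∑ i ∈ range (m + 1), m.choose i * c ^ i := sum_le_sum_of_subset ht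
    _ = (c + 1) ^ m := by
      rw [add_pow]
      exact sum_congr rfl fun i _ => by rw [Nat.cast_id]; ring

theorem two_pow_pred_sub_one_mul_three_pow_le (i : ℕ) : (2 ^ (i - 1) - 1) * 3 ^ i ≤ 6 ^ i :=
  calc (2 ^ (i - 1) - 1) * 3 ^ i
      ≤ 2 ^ i * 3 ^ i := Nat.mul_le_mul_right _ ((Nat.sub_le _ _).trans
        (Nat.pow_le_pow_right two_pos (Nat.sub_le _ _)))
    _ = 6 ^ i := (Nat.mul_pow 2 3 i).symm

theorem sum_choose_mul_stirling_two_mul_three_pow_le (m : ℕ) :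
    ∑ i ∈ Icc 2 m, m.choose i * (2 ^ (i - 1) - 1) * 3 ^ i ≤ 7 ^ m := by
  simp_rw [mul_assoc]
  refine Nat.sum_choose_mul_le_add_one_pow (fun i hi => ?_)
    fun i _ => two_pow_pred_sub_one_mul_three_pow_le i
  simp only [mem_Icc, mem_range] at hi ⊢
  omega

theorem Nat.choose_two_two_pow (s : ℕ) : (2 ^ s).choose 2 = 2 ^ (s - 1) * (2 ^ s - 1) := by
  cases s with
  | zero => rfl
  | succ s =>
    rw [Nat.choose_two_right, pow_succ', mul_assoc, Nat.mul_div_cancel_left _ two_pos]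
    rfl

theorem Real.logb_natCast_le_of_le_pow {b : ℝ} (hb : 1 < b) {n k : ℕ} (h : (n : ℝ) ≤ b ^ k) :
    Real.logb b n ≤ k := by
  rcases n.eq_zero_or_pos with rfl | hn
  · simp
  · rw [Real.logb_le_iff_le_rpow hb (by exact_mod_cast hn), Real.rpow_natCast]
    exact h

theorem fb_counting_lower_bound_general (s m : ℕ)
    (h : 7 ^ m < 2 ^ (s - 1) * (2 ^ s - 1)) :
    (∑ i ∈ Finset.Icc 2 m, m.choose i * (2 ^ (i - 1) - 1) * 3 ^ i < (2 ^ s).choose 2) ∧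
    ∀ m' : ℕ, 1 ≤ m' →
      (2 ^ s + 2 - 2).choose 2 ≤
        ∑ i ∈ Finset.Icc 2 m', m'.choose i * (2 ^ (i - 1) - 1) * 3 ^ i →
      (m' : ℝ) ≥ Real.logb 7 ((2 : ℝ) ^ (s - 1) * (2 ^ s - 1)) := by
  refine ⟨Nat.choose_two_two_pow s ▸
    (sum_choose_mul_stirling_two_mul_three_pow_le m).trans_lt h, fun m' _ hcond => ?_⟩
  have hle : (2 ^ s).choose 2 ≤ 7 ^ m' := by
    simpa using hcond.trans (sum_choose_mul_stirling_two_mul_three_pow_le m')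
  have hcast : ((2 ^ s).choose 2 : ℝ) = (2 : ℝ) ^ (s - 1) * (2 ^ s - 1) := by
    rw [Nat.choose_two_two_pow, Nat.cast_mul, Nat.cast_sub Nat.one_le_two_pow]
    push_cast
    rfl
  rw [← hcast]
  exact Real.logb_natCast_le_of_le_pow (by norm_num) (by exact_mod_cast hle)

/-- If `7^m < 2^(s-1)·(2^s-1)` then the counting condition
`∑_{i=2}^m C(m,i)·S(i,2)·3^i ≥ C(2^s+2-2, 2)` fails; consequently any `m` satisfying
the counting condition obeys `m ≥ log₇(2^(s-1)·(2^s-1))`. -/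
theorem fb_counting_lower_bound (s m : ℕ) (hs : 1 ≤ s) (hm : 1 ≤ m)
    (h : 7 ^ m < 2 ^ (s - 1) * (2 ^ s - 1)) :
    (∑ i ∈ Finset.Icc 2 m, m.choose i * (2 ^ (i - 1) - 1) * 3 ^ i < (2 ^ s).choose 2) ∧
    ∀ m' : ℕ, 1 ≤ m' →
      (2 ^ s + 2 - 2).choose 2 ≤
        ∑ i ∈ Finset.Icc 2 m', m'.choose i * (2 ^ (i - 1) - 1) * 3 ^ i →
      (m' : ℝ) ≥ Real.logb 7 ((2 : ℝ) ^ (s - 1) * (2 ^ s - 1)) :=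
  fb_counting_lower_bound_general s m h
end

section
/- Let s, t, m, r be positive integers and suppose there is a function E : F₂^s → (F₂^t)^m (an encoding into m buckets of t bits) such that for every nonzero u ∈ F₂^s there exists a set S ⊆ {1,...,m} with |S| ≤ r and a choice, for each bucket j ∈ S, of a nonzero F₂-linear functional of that bucket's contents, whose sum equals the linear functional x ↦ ⟨u,x⟩, where E is F₂-linear. Then there exists an s × (m·(2^t - 1)) matrix H over F₂ such that every vector of F₂^s is a sum of at most r columns of H. In particular h[s,r] ≤ m·(2^t - 1), where h[s,r] is the smallest length of a binary linear code with covering radius r and redundancy s. -/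
/-!
Each bucket `j` and nonzero functional `f` of its `t` cells gives the column
`i ↦ f ((E eᵢ) j)`; there are `m (2^t - 1)` such columns. If the forms `x ↦ f_j ((E x) j)`
of the buckets `j ∈ S` sum to `x ↦ ⟨u, x⟩`, evaluating at the unit vectors `eᵢ` shows that
the corresponding `|S| ≤ r` columns sum to `u`.
-/

/-- `binaryCoveringLength s r` is `h[s,r]`: the smallest length `n` of a binary linear
code with redundancy `s` and covering radius `r`, i.e. the smallest `n` for which there
is an `s × n` parity check matrix over `F₂` every syndrome of which is a sum of at most
`r` columns. -/
noncomputable def binaryCoveringLength (s r : ℕ) : ℕ :=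
  sInf {n : ℕ | ∃ H : Matrix (Fin s) (Fin n) (ZMod 2),
    ∀ v : Fin s → ZMod 2, ∃ T : Finset (Fin n), T.card ≤ r ∧ v = ∑ j ∈ T, fun i => H i j}

variable {R σ ι κ : Type*}

def Matrix.CoversWithin [AddCommMonoid R] (H : Matrix σ ι R) (r : ℕ) : Prop :=
  ∀ v : σ → R, ∃ T : Finset ι, T.card ≤ r ∧ v = ∑ j ∈ T, fun i => H i j

theorem Matrix.CoversWithin.submatrix_equiv [AddCommMonoid R] {H : Matrix σ ι R} {r : ℕ}
    (hH : H.CoversWithin r) (e : ι ≃ κ) : (H.submatrix id e.symm).CoversWithin r := by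
  intro v
  obtain ⟨T, hT, rfl⟩ := hH v
  refine ⟨T.map e.toEmbedding, by simpa using hT, ?_⟩
  simp [Finset.sum_map]

theorem binaryCoveringLength_le {s n r : ℕ} {H : Matrix (Fin s) (Fin n) (ZMod 2)}
    (hH : H.CoversWithin r) : binaryCoveringLength s r ≤ n :=
  Nat.sInf_le ⟨H, hH⟩

section BucketFunctional

variable [Semiring R] [Fintype σ] [DecidableEq σ] {β τ : Type*} [Fintype τ]

def bucketFunctionalMatrix (E : (σ → R) → β → τ → R) :
    Matrix σ (β × {f : τ → R // f ≠ 0}) R :=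
  fun i p => ∑ k, (p.2 : τ → R) k * E (Pi.single i 1) p.1 k

theorem sum_cols_bucketFunctionalMatrix {E : (σ → R) → β → τ → R} {u : σ → R}
    {S : Finset β} {f : β → τ → R} (hf : ∀ j ∈ S, f j ≠ 0)
    (hrec : ∀ x : σ → R, ∑ j ∈ S, ∑ k, f j k * E x j k = ∑ i, u i * x i) :
    ∑ j ∈ S.attach, (fun i => bucketFunctionalMatrix E i (j.1, ⟨f j, hf j j.2⟩)) = u := by
  funext i
  simp only [Finset.sum_apply, bucketFunctionalMatrix]
  rw [Finset.sum_attach S (fun j => ∑ k, f j k * E (Pi.single i 1) j k), hrec]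
  simp [Pi.single_apply]

theorem coversWithin_bucketFunctionalMatrix (E : (σ → R) → β → τ → R) (r : ℕ)
    (hrec : ∀ u : σ → R, u ≠ 0 →
      ∃ (S : Finset β) (f : β → τ → R),
        S.card ≤ r ∧ (∀ j ∈ S, f j ≠ 0) ∧
        ∀ x : σ → R, ∑ j ∈ S, ∑ k, f j k * E x j k = ∑ i, u i * x i) :
    (bucketFunctionalMatrix E).CoversWithin r := by
  intro u
  by_cases hu : u = 0
  · exact ⟨∅, by simp, by simp [hu]⟩
  obtain ⟨S, f, hS, hf, hsum⟩ := hrec u hu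
  let col : S ↪ β × {f : τ → R // f ≠ 0} :=
    ⟨fun j => (j.1, ⟨f j, hf j j.2⟩), fun a b hab => Subtype.ext (congrArg Prod.fst hab)⟩
  refine ⟨S.attach.map col, by simpa using hS, ?_⟩
  rw [Finset.sum_map]
  exact (sum_cols_bucketFunctionalMatrix hf hsum).symm

end BucketFunctional

theorem card_fin_prod_nonzero_fun_zmod_two (m t : ℕ) :
    Fintype.card (Fin m × {f : Fin t → ZMod 2 // f ≠ 0}) = m * (2 ^ t - 1) := by
  rw [Fintype.card_prod, Fintype.card_subtype_compl]
  simp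

theorem locality_code_to_covering_code_general (s t m r : ℕ)
    (E : (Fin s → ZMod 2) → Fin m → Fin t → ZMod 2)
    (hrec : ∀ u : Fin s → ZMod 2, u ≠ 0 →
      ∃ (S : Finset (Fin m)) (f : Fin m → Fin t → ZMod 2),
        S.card ≤ r ∧ (∀ j ∈ S, f j ≠ 0) ∧
        ∀ x : Fin s → ZMod 2,
          ∑ j ∈ S, ∑ i : Fin t, f j i * E x j i = ∑ i : Fin s, u i * x i) :
    (∃ H : Matrix (Fin s) (Fin (m * (2 ^ t - 1))) (ZMod 2),
      ∀ v : Fin s → ZMod 2, ∃ T : Finset (Fin (m * (2 ^ t - 1))),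
        T.card ≤ r ∧ v = ∑ j ∈ T, fun i => H i j) ∧
    binaryCoveringLength s r ≤ m * (2 ^ t - 1) := by
  have hH := (coversWithin_bucketFunctionalMatrix E r hrec).submatrix_equiv
    (Fintype.equivFinOfCardEq (card_fin_prod_nonzero_fun_zmod_two m t))
  exact ⟨⟨_, hH⟩, binaryCoveringLength_le hH⟩

/-- A linear `(s,1,m,t,r)` locality functional array code yields a parity check matrix of
a binary covering code of length `m·(2^t-1)` and covering radius `r`; in particular
`h[s,r] ≤ m·(2^t-1)`. -/
theorem locality_code_to_covering_code (s t m r : ℕ)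
    (hs : 1 ≤ s) (ht : 1 ≤ t) (hm : 1 ≤ m) (hr : 1 ≤ r)
    (E : (Fin s → ZMod 2) → Fin m → Fin t → ZMod 2)
    (hlin : IsLinearMap (ZMod 2) E)
    (hrec : ∀ u : Fin s → ZMod 2, u ≠ 0 →
      ∃ (S : Finset (Fin m)) (f : Fin m → Fin t → ZMod 2),
        S.card ≤ r ∧ (∀ j ∈ S, f j ≠ 0) ∧
        ∀ x : Fin s → ZMod 2,
          ∑ j ∈ S, ∑ i : Fin t, f j i * E x j i = ∑ i : Fin s, u i * x i) :
    (∃ H : Matrix (Fin s) (Fin (m * (2 ^ t - 1))) (ZMod 2),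
      ∀ v : Fin s → ZMod 2, ∃ T : Finset (Fin (m * (2 ^ t - 1))),
        T.card ≤ r ∧ v = ∑ j ∈ T, fun i => H i j) ∧
    binaryCoveringLength s r ≤ m * (2 ^ t - 1) :=
  locality_code_to_covering_code_general s t m r E hrec
end
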